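/- arXiv:math/0409270 — 4 statements merged into one kernel-verified Lean document; each statement's English description precedes it below -/
import Mathlib

section
/- Let B be a category, let A and B be objects of B, and let ε : A → B and μ : B → A be morphisms with μ ∘ ε = id_A; put ρ = ε ∘ μ. Consider the functor from the poset ℕ (viewed as a category) to B whose value at every n is B and whose transition morphism from n to n+1 is ρ for every n. Then the cocone on this functor with apex A all of whose components equal μ : B → A is a colimit cocone; that is, A is the colimit of the sequence B →ρ B →ρ B → ⋯ with constant limiting morphism μ. -/
/-!
If `ε ≫ μ = 𝟙 A` and `s` is a cocone under `X ⟶ρ X ⟶ρ ⋯` with `ρ = μ ≫ ε`, then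
`ε ≫ sₙ₊₁ = ε ≫ ρ ≫ sₙ₊₁ = ε ≫ sₙ`, so all `ε ≫ sₙ` agree and `sₙ = ρ ≫ sₙ₊₁ = μ ≫ (ε ≫ s₀)`.
Hence `ε ≫ s₀` is a factorisation of `s` through `μ`, and it is the only one because `μ` is
split epi.
-/

open CategoryTheory CategoryTheory.Limits

universe v u

namespace CategoryTheory

variable {C : Type u} [Category.{v} C]

lemma Limits.Cocone.ofSequence_w {X : ℕ → C} {f : ∀ n, X n ⟶ X (n + 1)}
    (s : Cocone (Functor.ofSequence f)) (n : ℕ) : f n ≫ s.ι.app (n + 1) = s.ι.app n := by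
  have := s.w (homOfLE (n.le_add_right 1))
  rwa [Functor.ofSequence_map_homOfLE_succ] at this

namespace Retract

variable {A X : C} (e : Retract A X)

section

variable {Y : C} {g : ℕ → (X ⟶ Y)}

lemma i_comp_eq_i_comp_zero (hg : ∀ n, (e.r ≫ e.i) ≫ g (n + 1) = g n) (n : ℕ) :
    e.i ≫ g n = e.i ≫ g 0 := by
  induction n with
  | zero => rfl
  | succ n ih => rw [← ih, ← hg n, Category.assoc, e.retract_assoc]

lemma r_comp_i_comp_zero (hg : ∀ n, (e.r ≫ e.i) ≫ g (n + 1) = g n) (n : ℕ) :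
    e.r ≫ e.i ≫ g 0 = g n := by
  rw [← e.i_comp_eq_i_comp_zero hg (n + 1), ← Category.assoc, hg n]

end

def sequenceCocone : Cocone (Functor.ofSequence fun _ : ℕ => e.r ≫ e.i) where
  pt := A
  ι := NatTrans.ofSequence (fun _ => e.r) fun _ => by
    rw [Functor.ofSequence_map_homOfLE_succ]
    exact (Category.assoc _ _ _).trans (e.r ≫= e.retract)

def isColimitSequenceCocone : IsColimit e.sequenceCocone where
  desc s := e.i ≫ s.ι.app 0
  fac s := e.r_comp_i_comp_zero s.ofSequence_w
  uniq s m hm := by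
    rw [← hm 0]
    exact (e.retract_assoc _).symm

end Retract

end CategoryTheory

/-- Let `ε : A ⟶ X`, `μ : X ⟶ A` with `μ ∘ ε = id_A`, and put
`ρ = ε ∘ μ : X ⟶ X`.  Then the cocone with apex `A` and all components equal to `μ`
over the sequence `X ⟶ρ X ⟶ρ X ⟶ ⋯` (indexed by the poset `ℕ`) is a colimit cocone. -/
theorem retract_isColimit_of_idempotent_sequence {B : Type u} [Category.{v} B]
    (A X : B) (ε : A ⟶ X) (μ : X ⟶ A) (h : ε ≫ μ = 𝟙 A) :
    Nonempty (IsColimit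
      ({ pt := A
         ι :=
          { app := fun _ : ℕ => μ
            naturality := by
              have key : ∀ (m n : ℕ) (hmn : m ≤ n),
                  (Functor.ofSequence fun _ : ℕ => (μ ≫ ε : X ⟶ X)).map
                    (homOfLE hmn) ≫ μ = μ := by
                intro m n hmn
                induction hmn with
                | refl => simp; exact Category.id_comp μ
                | @step k hk ih =>
                    rw [show (homOfLE (Nat.le_succ_of_le hk) : (m : ℕ) ⟶ (k + 1 : ℕ)) =
                          homOfLE hk ≫ homOfLE (Nat.le_succ k) from Subsingleton.elim _ _,
                        Functor.map_comp]
                    erw [Category.assoc, Functor.ofSequence_map_homOfLE_succ]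
                    erw [Category.assoc, h, Category.comp_id, ih]
              intro m n g
              have hg : g = homOfLE (leOfHom g) := Subsingleton.elim _ _
              simp only [Functor.const_obj_obj, Functor.const_obj_map, Category.comp_id]
              rw [hg, key]
              exact (Category.comp_id _).symm } } :
        Cocone (Functor.ofSequence fun _ : ℕ => (μ ≫ ε : X ⟶ X)))) :=
  ⟨(Retract.mk ε μ h).isColimitSequenceCocone⟩
end

section
/- For every object X of I and every n ≥ 1, there exists a unique morphism s̄^X_n : Q^n(X) → Q^{n+1}(X) in A such that s̄^X_n ∘ a^X_n = a^X_{n+1} ∘ s^X_n and ζ^X_{n+1} ∘ F(s̄^X_n) = ρ_X ∘ ζ^X_n. -/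
open CategoryTheory CategoryTheory.Limits

universe v₁ v₂ v₃ u₁ u₂ u₃

variable {I : Type u₁} [Category.{v₁} I] {B : Type u₂} [Category.{v₂} B]

noncomputable section

variable [HasBinaryProducts B] (Dh : I ⥤ B)

/-- `powD Dh X n` is the object `D̂^{n+1}(X)`: thus `powD Dh X 0 = D̂(X)` and
`powD Dh X (n+1) = D̂(X) ⨯ powD Dh X n`.  (Indices are shifted by one: the paper's
`D̂^n(X)`, `n ≥ 1`, is `powD Dh X (n-1)`.) -/
def powD (X : I) : ℕ → B
  | 0 => Dh.obj X
  | n + 1 => Dh.obj X ⨯ powD X n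

/-- `alphaD Dh X n` is `α^X_{n+1} : D̂^{n+1}(X) ⟶ D̂(X)`; `α^X_1` is the identity, and
`α^X_{n+2}` is the first product projection. -/
def alphaD (X : I) : ∀ n : ℕ, powD Dh X n ⟶ Dh.obj X
  | 0 => 𝟙 (Dh.obj X)
  | _ + 1 => prod.fst

/-- `piD Dh X n` is `π^X_{n+2} : D̂^{n+2}(X) ⟶ D̂^{n+1}(X)`, the second product projection. -/
def piD (X : I) (n : ℕ) : powD Dh X (n + 1) ⟶ powD Dh X n :=
  prod.snd

/-- `powMapD Dh f n` is `D̂^{n+1}(f) : D̂^{n+1}(X) ⟶ D̂^{n+1}(Y)`, i.e. `D̂(f)` for `n = 0`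
and the product morphism `D̂(f) ⨯ D̂^{n+1}(f)` afterwards. -/
def powMapD {X Y : I} (f : X ⟶ Y) : ∀ n : ℕ, powD Dh X n ⟶ powD Dh Y n
  | 0 => Dh.map f
  | n + 1 => prod.map (Dh.map f) (powMapD f n)

variable (D : I ⥤ B) (ε : D ⟶ Dh) (μ : Dh ⟶ D)

/-- `rhoD Dh D ε μ X` is `ρ_X = ε_X ∘ μ_X : D̂(X) ⟶ D̂(X)`. -/
def rhoD (X : I) : Dh.obj X ⟶ Dh.obj X := μ.app X ≫ ε.app X

/-- `sigmaD Dh D ε μ X n` is `σ^X_{n+1} : D̂^{n+1}(X) ⟶ D̂^{n+2}(X)`, the pairing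
`⟨ρ_X ∘ α^X_{n+1}, id⟩`. -/
def sigmaD (X : I) (n : ℕ) : powD Dh X n ⟶ powD Dh X (n + 1) :=
  prod.lift (alphaD Dh X n ≫ rhoD Dh D ε μ X) (𝟙 (powD Dh X n))

end

/-!
Since `a^X_n` is an epimorphism, `s̄^X_n` is unique as soon as it exists. For existence,
`F(a^X_{n+1} ∘ s^X_n)` factors through `F(a^X_n)` as `ρ_X` (up to `ζ`), because
`α_{n+1} ∘ σ_n = ρ_X ∘ α_n`; the projectability of `a^X_n` lifts this factorization to `A`.
-/

namespace CategoryTheory.Functor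

variable {A : Type u₃} [Category.{v₃} A] (F : A ⥤ B)

/-- The lifting clause of a projectability witness `(a, ζ)`. -/
def HasFactorizationLifts {E Q : A} (a : E ⟶ Q) : Prop :=
  ∀ {Z : A} (u : E ⟶ Z) (θ : F.obj Q ⟶ F.obj Z),
    F.map u = F.map a ≫ θ → ∃ g : Q ⟶ Z, u = a ≫ g ∧ θ = F.map g

variable {F}

theorem HasFactorizationLifts.existsUnique {E Q Z : A} {P : B} {a : E ⟶ Q} [Epi a]
    (ha : F.HasFactorizationLifts a) (e : F.obj Z ≅ P) {u : E ⟶ Z} {θ : F.obj Q ⟶ P}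
    (hu : F.map u ≫ e.hom = F.map a ≫ θ) :
    ∃! g : Q ⟶ Z, a ≫ g = u ∧ F.map g ≫ e.hom = θ := by
  obtain ⟨g, hug, hθg⟩ := ha u (θ ≫ e.inv) (by rw [← Category.assoc, Iso.eq_comp_inv, hu])
  refine ⟨g, ⟨hug.symm, by rw [← hθg, Category.assoc, Iso.inv_hom_id, Category.comp_id]⟩,
    fun g' ⟨hug', _⟩ => ?_⟩
  rw [← cancel_epi a, hug', hug]

end CategoryTheory.Functor

section

variable [HasBinaryProducts B] (D Dh : I ⥤ B) (ε : D ⟶ Dh) (μ : Dh ⟶ D)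

theorem sigmaD_alphaD (X : I) (n : ℕ) :
    sigmaD Dh D ε μ X n ≫ alphaD Dh X (n + 1) = alphaD Dh X n ≫ rhoD Dh D ε μ X :=
  prod.lift_fst _ _

end

theorem exists_unique_sbar_general [HasBinaryProducts B] (D Dh : I ⥤ B) (ε : D ⟶ Dh) (μ : Dh ⟶ D)
    {A : Type u₃} [Category.{v₃} A] (F : A ⥤ B)
    -- a lifting `E` of the unfolding of the retraction datum with respect to `F`
    -- (indices shifted by one: `E X n` is the paper's `E^{n+1}(X)`):
    (E : I → ℕ → A)
    (s : ∀ (X : I) (n : ℕ), E X n ⟶ E X (n + 1))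
    (η : ∀ (X : I) (n : ℕ), F.obj (E X n) ≅ powD Dh X n)
    (hηs : ∀ (X : I) (n : ℕ),
      F.map (s X n) ≫ (η X (n + 1)).hom = (η X n).hom ≫ sigmaD Dh D ε μ X n)
    -- projectability witnesses `(a^X_n, ζ^X_n)` for `(α^X_n ∘ η^X_n, E^n(X), D̂(X))`:
    (Q : I → ℕ → A)
    (a : ∀ (X : I) (n : ℕ), E X n ⟶ Q X n)
    (ha : ∀ (X : I) (n : ℕ), Epi (a X n))
    (ζ : ∀ (X : I) (n : ℕ), F.obj (Q X n) ≅ Dh.obj X)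
    (hζ : ∀ (X : I) (n : ℕ),
      F.map (a X n) ≫ (ζ X n).hom = (η X n).hom ≫ alphaD Dh X n)
    (hwit : ∀ (X : I) (n : ℕ) {Z : A} (u : E X n ⟶ Z) (θ : F.obj (Q X n) ⟶ F.obj Z),
      F.map u = F.map (a X n) ≫ θ → ∃ g : Q X n ⟶ Z, u = a X n ≫ g ∧ θ = F.map g)
    (X : I) (n : ℕ) :
    ∃! sb : Q X n ⟶ Q X (n + 1),
      a X n ≫ sb = s X n ≫ a X (n + 1) ∧
      F.map sb ≫ (ζ X (n + 1)).hom = (ζ X n).hom ≫ rhoD Dh D ε μ X := by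
  have hfactor : F.map (s X n ≫ a X (n + 1)) ≫ (ζ X (n + 1)).hom =
      F.map (a X n) ≫ (ζ X n).hom ≫ rhoD Dh D ε μ X := by
    rw [F.map_comp_assoc, hζ, reassoc_of% hηs, sigmaD_alphaD, reassoc_of% hζ]
  have := ha X n
  exact Functor.HasFactorizationLifts.existsUnique (@hwit X n) _ hfactor

/-- (Lemma `L:existsbar`.)  For every object `X` of `I` and every
`n ≥ 1` (indices shifted by one, so `n : ℕ` stands for the paper's `n + 1 ≥ 1`), there
exists a unique morphism `s̄^X_n : Q^n(X) ⟶ Q^{n+1}(X)` such that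
`s̄^X_n ∘ a^X_n = a^X_{n+1} ∘ s^X_n` and `ζ^X_{n+1} ∘ F(s̄^X_n) = ρ_X ∘ ζ^X_n`. -/
theorem exists_unique_sbar [HasBinaryProducts B] (D Dh : I ⥤ B) (ε : D ⟶ Dh) (μ : Dh ⟶ D)
    (hretr : ∀ X : I, ε.app X ≫ μ.app X = 𝟙 (D.obj X))
    {A : Type u₃} [Category.{v₃} A] (F : A ⥤ B)
    -- a lifting `E` of the unfolding of the retraction datum with respect to `F`
    -- (indices shifted by one: `E X n` is the paper's `E^{n+1}(X)`):
    (E : I → ℕ → A)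
    (s : ∀ (X : I) (n : ℕ), E X n ⟶ E X (n + 1))
    (Emap : ∀ {X Y : I}, (X ⟶ Y) → ∀ n : ℕ, E X n ⟶ E Y n)
    (hEid : ∀ (X : I) (n : ℕ), Emap (𝟙 X) n = 𝟙 (E X n))
    (hEcomp : ∀ {X Y Z : I} (f : X ⟶ Y) (g : Y ⟶ Z) (n : ℕ),
      Emap (f ≫ g) n = Emap f n ≫ Emap g n)
    (hEs : ∀ {X Y : I} (f : X ⟶ Y) (n : ℕ), s X n ≫ Emap f (n + 1) = Emap f n ≫ s Y n)
    (η : ∀ (X : I) (n : ℕ), F.obj (E X n) ≅ powD Dh X n)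
    (hηnat : ∀ {X Y : I} (f : X ⟶ Y) (n : ℕ),
      F.map (Emap f n) ≫ (η Y n).hom = (η X n).hom ≫ powMapD Dh f n)
    (hηs : ∀ (X : I) (n : ℕ),
      F.map (s X n) ≫ (η X (n + 1)).hom = (η X n).hom ≫ sigmaD Dh D ε μ X n)
    -- projectability witnesses `(a^X_n, ζ^X_n)` for `(α^X_n ∘ η^X_n, E^n(X), D̂(X))`:
    (Q : I → ℕ → A)
    (a : ∀ (X : I) (n : ℕ), E X n ⟶ Q X n)
    (ha : ∀ (X : I) (n : ℕ), Epi (a X n))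
    (ζ : ∀ (X : I) (n : ℕ), F.obj (Q X n) ≅ Dh.obj X)
    (hζ : ∀ (X : I) (n : ℕ),
      F.map (a X n) ≫ (ζ X n).hom = (η X n).hom ≫ alphaD Dh X n)
    (hwit : ∀ (X : I) (n : ℕ) {Z : A} (u : E X n ⟶ Z) (θ : F.obj (Q X n) ⟶ F.obj Z),
      F.map u = F.map (a X n) ≫ θ → ∃ g : Q X n ⟶ Z, u = a X n ≫ g ∧ θ = F.map g)
    (X : I) (n : ℕ) :
    ∃! sb : Q X n ⟶ Q X (n + 1),
      a X n ≫ sb = s X n ≫ a X (n + 1) ∧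
      F.map sb ≫ (ζ X (n + 1)).hom = (ζ X n).hom ≫ rhoD Dh D ε μ X :=
  exists_unique_sbar_general D Dh ε μ F E s η hηs Q a ha ζ hζ hwit X n
end

section
/- Assume given, for every morphism f : X → Y of I and every n ≥ 1, a morphism Q^n(f) : Q^n(X) → Q^n(Y) satisfying Q^n(f) ∘ a^X_n = a^Y_n ∘ E^n(f), and for every object X and n ≥ 1 a morphism s̄^X_n : Q^n(X) → Q^{n+1}(X) satisfying s̄^X_n ∘ a^X_n = a^X_{n+1} ∘ s^X_n. Then: (1) Q^n(id_X) = id_{Q^n(X)}; (2) Q^n(g ∘ f) = Q^n(g) ∘ Q^n(f) for all composable f : X → Y and g : Y → Z; and (3) Q^{n+1}(f) ∘ s̄^X_n = s̄^Y_n ∘ Q^n(f). Consequently the assignments (X, n) ↦ Q^{n+1}(X), (f, m ≤ n) ↦ s̄ ∘ ⋯ ∘ s̄ ∘ Q^{m+1}(f) define a functor from I × ℕ to A. -/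
open CategoryTheory CategoryTheory.Limits

universe v₁ v₂ v₃ u₁ u₂ u₃

variable {I : Type u₁} [Category.{v₁} I] {B : Type u₂} [Category.{v₂} B]

section
variable {A : Type u₃} [Category.{v₃} A]

/-- Given a family `Q` of objects and morphisms `s̄^X_n : Q^n(X) ⟶ Q^{n+1}(X)`,
`sbarChain Q sbar X m k` is the composite `s̄^X_{m+k} ∘ ⋯ ∘ s̄^X_{m+1}` (the identity for
`k = 0`). -/
def sbarChain (Q : I → ℕ → A) (sbar : ∀ (X : I) (n : ℕ), Q X n ⟶ Q X (n + 1)) (X : I)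
    (m : ℕ) : ∀ k : ℕ, Q X m ⟶ Q X (m + k)
  | 0 => 𝟙 _
  | k + 1 => sbarChain Q sbar X m k ≫ sbar X (m + k)

end

section Aux
variable {A : Type u₃} [Category.{v₃} A]
variable (Q : I → ℕ → A) (sbar : ∀ (X : I) (n : ℕ), Q X n ⟶ Q X (n + 1))

lemma sbar_swap (X : I) {n n' : ℕ} (h : n = n') (h1 : Q X n = Q X n')
    (h2 : Q X (n + 1) = Q X (n' + 1)) :
    eqToHom h1 ≫ sbar X n' = sbar X n ≫ eqToHom h2 := by
  subst h; simp

lemma sbarChain_congr (X : I) (m : ℕ) {k k' : ℕ} (h : k = k')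
    (h1 : Q X (m + k') = Q X (m + k)) :
    sbarChain Q sbar X m k = sbarChain Q sbar X m k' ≫ eqToHom h1 := by
  subst h; simp

lemma sbarChain_swap (X : I) {n n' : ℕ} (h : n = n') (k : ℕ) (h1 : Q X n = Q X n')
    (h2 : Q X (n + k) = Q X (n' + k)) :
    eqToHom h1 ≫ sbarChain Q sbar X n' k = sbarChain Q sbar X n k ≫ eqToHom h2 := by
  subst h; simp

lemma sbarChain_add (X : I) (m k l : ℕ)
    (h : Q X (m + k + l) = Q X (m + (k + l))) :
    sbarChain Q sbar X m (k + l) =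
      (sbarChain Q sbar X m k ≫ sbarChain Q sbar X (m + k) l) ≫ eqToHom h := by
  induction l with
  | zero => simp [sbarChain]
  | succ l ih =>
    show sbarChain Q sbar X m (k + l) ≫ sbar X (m + (k + l)) = _
    rw [ih (by rw [Nat.add_assoc])]
    show _ = (sbarChain Q sbar X m k ≫ sbarChain Q sbar X (m + k) l ≫
        sbar X (m + k + l)) ≫ eqToHom h
    rw [Category.assoc, Category.assoc,
      sbar_swap Q sbar X (Nat.add_assoc m k l) (congrArg (Q X) (Nat.add_assoc m k l))
        (congrArg (Q X) (by omega))]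
    simp

lemma sbarChain_nat {A' : Type*} [Category A'] (Q' : I → ℕ → A')
    (sbar' : ∀ (X : I) (n : ℕ), Q' X n ⟶ Q' X (n + 1))
    (Qmap' : ∀ {X Y : I}, (X ⟶ Y) → ∀ n : ℕ, Q' X n ⟶ Q' Y n)
    (hnat : ∀ {X Y : I} (f : X ⟶ Y) (n : ℕ),
      sbar' X n ≫ Qmap' f (n + 1) = Qmap' f n ≫ sbar' Y n)
    {X Y : I} (f : X ⟶ Y) (m k : ℕ) :
    Qmap' f m ≫ sbarChain Q' sbar' Y m k =
      sbarChain Q' sbar' X m k ≫ Qmap' f (m + k) := by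
  induction k with
  | zero => simp [sbarChain]
  | succ k ih =>
    show Qmap' f m ≫ sbarChain Q' sbar' Y m k ≫ sbar' Y (m + k) = _
    rw [← Category.assoc, ih, Category.assoc, ← hnat]
    simp only [sbarChain, Category.assoc]
    rfl

lemma Qmap_swap {A' : Type*} [Category A'] (Q' : I → ℕ → A')
    (Qmap' : ∀ {X Y : I}, (X ⟶ Y) → ∀ n : ℕ, Q' X n ⟶ Q' Y n)
    {X Y : I} (f : X ⟶ Y) {n n' : ℕ} (h : n = n') (h1 : Q' X n = Q' X n')
    (h2 : Q' Y n = Q' Y n') :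
    eqToHom h1 ≫ Qmap' f n' = Qmap' f n ≫ eqToHom h2 := by
  subst h; simp

lemma Qmap_swap' {A' : Type*} [Category A'] (Q' : I → ℕ → A')
    (Qmap' : ∀ {X Y : I}, (X ⟶ Y) → ∀ n : ℕ, Q' X n ⟶ Q' Y n)
    {X Y : I} (f : X ⟶ Y) {n n' : ℕ} (h : n = n') (h1 : Q' X n = Q' X n')
    (h2 : Q' Y n = Q' Y n') {W : A'} (t : Q' Y n' ⟶ W) :
    eqToHom h1 ≫ Qmap' f n' ≫ t = Qmap' f n ≫ eqToHom h2 ≫ t := by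
  subst h; simp

lemma sbarChain_nat' {A' : Type*} [Category A'] (Q' : I → ℕ → A')
    (sbar' : ∀ (X : I) (n : ℕ), Q' X n ⟶ Q' X (n + 1))
    (Qmap' : ∀ {X Y : I}, (X ⟶ Y) → ∀ n : ℕ, Q' X n ⟶ Q' Y n)
    (hnat : ∀ {X Y : I} (f : X ⟶ Y) (n : ℕ),
      sbar' X n ≫ Qmap' f (n + 1) = Qmap' f n ≫ sbar' Y n)
    {X Y : I} (f : X ⟶ Y) (m k : ℕ) {W : A'} (t : Q' Y (m + k) ⟶ W) :
    Qmap' f m ≫ sbarChain Q' sbar' Y m k ≫ t =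
      sbarChain Q' sbar' X m k ≫ Qmap' f (m + k) ≫ t := by
  rw [← Category.assoc, sbarChain_nat Q' sbar' Qmap' @hnat, Category.assoc]

lemma sbarChain_swap' (X : I) {n n' : ℕ} (h : n = n') (k : ℕ) (h1 : Q X n = Q X n')
    (h2 : Q X (n + k) = Q X (n' + k)) {W : A} (t : Q X (n' + k) ⟶ W) :
    eqToHom h1 ≫ sbarChain Q sbar X n' k ≫ t =
      sbarChain Q sbar X n k ≫ eqToHom h2 ≫ t := by
  subst h; simp

lemma sbarChain_add'' (X : I) (m k l : ℕ)
    (h : Q X (m + (k + l)) = Q X (m + k + l)) {W : A} (t : Q X (m + k + l) ⟶ W) :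
    sbarChain Q sbar X m (k + l) ≫ eqToHom h ≫ t =
      sbarChain Q sbar X m k ≫ sbarChain Q sbar X (m + k) l ≫ t := by
  rw [sbarChain_add Q sbar X m k l h.symm]
  simp

end Aux

/-- (Lemma `L:Qnfunct`.)  Given the morphisms `Q^n(f)` (satisfying
`Q^n(f) ∘ a^X_n = a^Y_n ∘ E^n(f)`) and `s̄^X_n` (satisfying
`s̄^X_n ∘ a^X_n = a^X_{n+1} ∘ s^X_n`), one has: (1) `Q^n(id_X) = id`;
(2) `Q^n(g ∘ f) = Q^n(g) ∘ Q^n(f)`; (3) `Q^{n+1}(f) ∘ s̄^X_n = s̄^Y_n ∘ Q^n(f)`;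
and consequently `(X, n) ↦ Q^{n+1}(X)`, `(f, m ≤ m + k) ↦ s̄ ∘ ⋯ ∘ s̄ ∘ Q^{m+1}(f)`
define a functor from `I × ℕ` to `A`.  (Indices are shifted by one throughout.) -/
theorem Qmap_functorial [HasBinaryProducts B] (D Dh : I ⥤ B) (ε : D ⟶ Dh) (μ : Dh ⟶ D)
    (hretr : ∀ X : I, ε.app X ≫ μ.app X = 𝟙 (D.obj X))
    {A : Type u₃} [Category.{v₃} A] (F : A ⥤ B)
    -- a lifting `E` of the unfolding of the retraction datum with respect to `F`
    -- (indices shifted by one: `E X n` is the paper's `E^{n+1}(X)`):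
    (E : I → ℕ → A)
    (s : ∀ (X : I) (n : ℕ), E X n ⟶ E X (n + 1))
    (Emap : ∀ {X Y : I}, (X ⟶ Y) → ∀ n : ℕ, E X n ⟶ E Y n)
    (hEid : ∀ (X : I) (n : ℕ), Emap (𝟙 X) n = 𝟙 (E X n))
    (hEcomp : ∀ {X Y Z : I} (f : X ⟶ Y) (g : Y ⟶ Z) (n : ℕ),
      Emap (f ≫ g) n = Emap f n ≫ Emap g n)
    (hEs : ∀ {X Y : I} (f : X ⟶ Y) (n : ℕ), s X n ≫ Emap f (n + 1) = Emap f n ≫ s Y n)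
    (η : ∀ (X : I) (n : ℕ), F.obj (E X n) ≅ powD Dh X n)
    (hηnat : ∀ {X Y : I} (f : X ⟶ Y) (n : ℕ),
      F.map (Emap f n) ≫ (η Y n).hom = (η X n).hom ≫ powMapD Dh f n)
    (hηs : ∀ (X : I) (n : ℕ),
      F.map (s X n) ≫ (η X (n + 1)).hom = (η X n).hom ≫ sigmaD Dh D ε μ X n)
    -- projectability witnesses `(a^X_n, ζ^X_n)` for `(α^X_n ∘ η^X_n, E^n(X), D̂(X))`:
    (Q : I → ℕ → A)
    (a : ∀ (X : I) (n : ℕ), E X n ⟶ Q X n)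
    (ha : ∀ (X : I) (n : ℕ), Epi (a X n))
    (ζ : ∀ (X : I) (n : ℕ), F.obj (Q X n) ≅ Dh.obj X)
    (hζ : ∀ (X : I) (n : ℕ),
      F.map (a X n) ≫ (ζ X n).hom = (η X n).hom ≫ alphaD Dh X n)
    (hwit : ∀ (X : I) (n : ℕ) {Z : A} (u : E X n ⟶ Z) (θ : F.obj (Q X n) ⟶ F.obj Z),
      F.map u = F.map (a X n) ≫ θ → ∃ g : Q X n ⟶ Z, u = a X n ≫ g ∧ θ = F.map g)
    (Qmap : ∀ {X Y : I}, (X ⟶ Y) → ∀ n : ℕ, Q X n ⟶ Q Y n)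
    (hQa : ∀ {X Y : I} (f : X ⟶ Y) (n : ℕ), a X n ≫ Qmap f n = Emap f n ≫ a Y n)
    (sbar : ∀ (X : I) (n : ℕ), Q X n ⟶ Q X (n + 1))
    (hsbara : ∀ (X : I) (n : ℕ), a X n ≫ sbar X n = s X n ≫ a X (n + 1)) :
    (∀ (X : I) (n : ℕ), Qmap (𝟙 X) n = 𝟙 (Q X n)) ∧
    (∀ {X Y Z : I} (f : X ⟶ Y) (g : Y ⟶ Z) (n : ℕ),
      Qmap (f ≫ g) n = Qmap f n ≫ Qmap g n) ∧
    (∀ {X Y : I} (f : X ⟶ Y) (n : ℕ),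
      sbar X n ≫ Qmap f (n + 1) = Qmap f n ≫ sbar Y n) ∧
    ∃ (G : I × ℕ ⥤ A) (hobj : ∀ (X : I) (n : ℕ), G.obj (X, n) = Q X n),
      ∀ {X Y : I} (f : X ⟶ Y) (m k : ℕ),
        G.map ((f, homOfLE (Nat.le_add_right m k)) : (X, m) ⟶ (Y, m + k)) =
          eqToHom (hobj X m) ≫ Qmap f m ≫ sbarChain Q sbar Y m k ≫
            eqToHom (hobj Y (m + k)).symm := by
  have hid : ∀ (X : I) (n : ℕ), Qmap (𝟙 X) n = 𝟙 (Q X n) := by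
    intro X n
    haveI := ha X n
    rw [← cancel_epi (a X n), hQa, hEid, Category.id_comp, Category.comp_id]
  have hcomp : ∀ {X Y Z : I} (f : X ⟶ Y) (g : Y ⟶ Z) (n : ℕ),
      Qmap (f ≫ g) n = Qmap f n ≫ Qmap g n := by
    intro X Y Z f g n
    haveI := ha X n
    rw [← cancel_epi (a X n), hQa, hEcomp, ← Category.assoc, hQa, Category.assoc,
      Category.assoc, hQa]
  have hnat : ∀ {X Y : I} (f : X ⟶ Y) (n : ℕ),
      sbar X n ≫ Qmap f (n + 1) = Qmap f n ≫ sbar Y n := by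
    intro X Y f n
    haveI := ha X n
    rw [← cancel_epi (a X n)]
    conv_lhs => rw [← Category.assoc, hsbara, Category.assoc, hQa, ← Category.assoc,
      hEs, Category.assoc, ← hsbara]
    conv_rhs => rw [← Category.assoc, hQa, Category.assoc]
  refine ⟨hid, @hcomp, @hnat, ?_⟩
  refine ⟨{
    obj := fun p => Q p.1 p.2
    map := fun {p q} fh => Qmap fh.1 p.2 ≫ sbarChain Q sbar q.1 p.2 (q.2 - p.2) ≫
      eqToHom (congrArg (Q q.1) (Nat.add_sub_cancel' (leOfHom fh.2)))
    map_id := by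
      intro p
      show Qmap (𝟙 p.1) p.2 ≫ _ = _
      rw [hid, Category.id_comp,
        sbarChain_congr Q sbar p.1 p.2 (Nat.sub_self p.2) (by rw [Nat.sub_self]),
        Category.assoc, eqToHom_trans, eqToHom_refl]
      simp [sbarChain]
    map_comp := by
      intro p q r fh gh
      have hq : p.2 + (q.2 - p.2) = q.2 := Nat.add_sub_cancel' (leOfHom fh.2)
      have hr : (q.2 - p.2) + (r.2 - q.2) = r.2 - p.2 := by
        have := leOfHom fh.2; have := leOfHom gh.2; omega
      show Qmap (fh.1 ≫ gh.1) p.2 ≫ _ = _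
      rw [hcomp]
      simp only [Category.assoc]
      rw [Qmap_swap' Q Qmap gh.1 hq (congrArg (Q q.1) hq) (congrArg (Q r.1) hq),
        ← sbarChain_nat' Q sbar Qmap @hnat gh.1 p.2 (q.2 - p.2),
        sbarChain_swap' Q sbar r.1 hq (r.2 - q.2) (congrArg (Q r.1) hq)
          (congrArg (Q r.1) (by rw [hq])),
        eqToHom_trans,
        ← sbarChain_add'' Q sbar r.1 p.2 (q.2 - p.2) (r.2 - q.2)
          (congrArg (Q r.1) (Nat.add_assoc p.2 (q.2 - p.2) (r.2 - q.2)).symm),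
        eqToHom_trans,
        sbarChain_congr Q sbar r.1 p.2 hr (by rw [hr]),
        Category.assoc, eqToHom_trans] }, fun _ _ => rfl, ?_⟩
  intro X Y f m k
  show Qmap f m ≫ sbarChain Q sbar Y m ((m + k) - m) ≫ _ = _
  rw [sbarChain_congr Q sbar Y m (Nat.add_sub_cancel_left (n := m) (m := k))
      (congrArg (Q Y) (by rw [Nat.add_sub_cancel_left])),
    Category.assoc, eqToHom_trans]
  simp
end

section
/- Assume A has colimits of chains indexed by the poset ℕ and that F preserves such colimits. Assume given morphisms Q^n(f) : Q^n(X) → Q^n(Y) (for each f : X → Y in I and n ≥ 1) satisfying Q^n(f) ∘ a^X_n = a^Y_n ∘ E^n(f) and ζ^Y_n ∘ F(Q^n(f)) = D̂(f) ∘ ζ^X_n, and morphisms s̄^X_n : Q^n(X) → Q^{n+1}(X) satisfying s̄^X_n ∘ a^X_n = a^X_{n+1} ∘ s^X_n and ζ^X_{n+1} ∘ F(s̄^X_n) = ρ_X ∘ ζ^X_n. For each object X of I let R(X), with morphisms t^X_n : Q^n(X) → R(X) satisfying t^X_n = t^X_{n+1} ∘ s̄^X_n, be a colimit of the chain Q¹(X)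 → Q²(X) → ⋯ with transition morphisms s̄^X_n, and for f : X → Y let R(f) : R(X) → R(Y) be the unique morphism with R(f) ∘ t^X_n = t^Y_n ∘ Q^n(f) for all n ≥ 1. Then: (1) for each X there exists a unique morphism δ^X : F(R(X)) → D(X) such that δ^X ∘ F(t^X_n) = μ_X ∘ ζ^X_n for all n ≥ 1; (2) each δ^X is an isomorphism; and (3) for every f : X → Y, δ^Y ∘ F(R(f)) = D(f) ∘ δ^X. In particular δ is a natural isomorphism between the composite of R with F and the functor D, so R is a lifting of D with respect to F. -/
open CategoryTheory CategoryTheory.Limits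

universe v₁ v₂ v₃ u₁ u₂ u₃

variable {I : Type u₁} [Category.{v₁} I] {B : Type u₂} [Category.{v₂} B]

/-- The cocone over the chain `Functor.ofSequence f` determined by a compatible family
`t n : X n ⟶ pt` with `t n = f n ≫ t (n+1)` for all `n`. -/
def chainCocone {C : Type u₃} [Category.{v₃} C] {X : ℕ → C} (f : ∀ n, X n ⟶ X (n + 1))
    (pt : C) (t : ∀ n, X n ⟶ pt) (ht : ∀ n, t n = f n ≫ t (n + 1)) :
    Cocone (Functor.ofSequence f) where
  pt := pt
  ι :=
    { app := t
      naturality := by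
        have key : ∀ (m n : ℕ) (hmn : m ≤ n),
            (Functor.ofSequence f).map (homOfLE hmn) ≫ t n = t m := by
          intro m n hmn
          induction hmn with
          | refl => simp; exact Category.id_comp _
          | @step k hk ih =>
              rw [show (homOfLE (Nat.le_succ_of_le hk) : (m : ℕ) ⟶ (k + 1 : ℕ)) =
                    homOfLE hk ≫ homOfLE (Nat.le_succ k) from Subsingleton.elim _ _,
                  Functor.map_comp]
              refine (Category.assoc _ _ _).trans ?_
              rw [Functor.ofSequence_map_homOfLE_succ]
              exact (congrArg ((Functor.ofSequence f).map (homOfLE hk) ≫ ·) (ht k).symm).trans ih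
        intro m n g
        have hg : g = homOfLE (leOfHom g) := Subsingleton.elim _ _
        simp only [Functor.const_obj_obj, Functor.const_obj_map, Category.comp_id]
        rw [hg, key]
        exact (Category.comp_id _).symm }

/-! Under `ζ`, the chain `F(Q¹X) → F(Q²X) → ⋯` becomes the constant chain on `D̂(X)` whose
transitions are all the idempotent `ρ_X = ε_X ∘ μ_X`, which splits through `D(X)`. A chain whose
transitions factor as `p_n` followed by a section `i_{n+1}` of `p_{n+1}` has the common retract
as colimit, with legs `p_n`. Since `F` preserves the colimit `R(X)`, this gives `F(R(X)) ≅ D(X)`,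
and naturality is checked on the colimit legs. -/

namespace CategoryTheory.Limits

variable {C : Type*} [Category C] {K : ℕ ⥤ C} {Y : C}
  (p : ∀ n, K.obj n ⟶ Y) (i : ∀ n, Y ⟶ K.obj n) (hip : ∀ n, i n ≫ p n = 𝟙 Y)
  (hstep : ∀ n, K.map (homOfLE (n.le_add_right 1)) = p n ≫ i (n + 1))

@[simps! ι_app]
def coconeOfSplitSteps : Cocone K where
  pt := Y
  ι := NatTrans.ofSequence p fun n => by simp [hstep, hip]

include hip hstep in
lemma comp_ι_app_eq_comp_ι_app_zero_of_splitSteps (c : Cocone K) (n : ℕ) :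
    i n ≫ c.ι.app n = i 0 ≫ c.ι.app 0 := by
  induction n with
  | zero => rfl
  | succ n ih =>
    rw [← ih, ← c.w (homOfLE (n.le_add_right 1)), hstep, Category.assoc, reassoc_of% hip]

def isColimitCoconeOfSplitSteps : IsColimit (coconeOfSplitSteps p i hip hstep) where
  desc c := i 0 ≫ c.ι.app 0
  fac c n := show p n ≫ i 0 ≫ c.ι.app 0 = c.ι.app n by
    rw [← comp_ι_app_eq_comp_ι_app_zero_of_splitSteps p i hip hstep c (n + 1), ← Category.assoc,
      ← hstep, c.w]
  uniq c m hm := by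
    change Y ⟶ c.pt at m
    calc m = (i 0 ≫ p 0) ≫ m := by rw [hip, Category.id_comp]
      _ = i 0 ≫ c.ι.app 0 := by rw [Category.assoc, ← hm 0]; rfl

end CategoryTheory.Limits

theorem R_lifts_D_general (D Dh : I ⥤ B) (ε : D ⟶ Dh) (μ : Dh ⟶ D)
    (hretr : ∀ X : I, ε.app X ≫ μ.app X = 𝟙 (D.obj X))
    {A : Type u₃} [Category.{v₃} A] (F : A ⥤ B)
    -- projectability witnesses `(a^X_n, ζ^X_n)` for `(α^X_n ∘ η^X_n, E^n(X), D̂(X))`: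
    (Q : I → ℕ → A)
    (ζ : ∀ (X : I) (n : ℕ), F.obj (Q X n) ≅ Dh.obj X)
    (Qmap : ∀ {X Y : I}, (X ⟶ Y) → ∀ n : ℕ, Q X n ⟶ Q Y n)
    (hQζ : ∀ {X Y : I} (f : X ⟶ Y) (n : ℕ),
      F.map (Qmap f n) ≫ (ζ Y n).hom = (ζ X n).hom ≫ Dh.map f)
    (sbar : ∀ (X : I) (n : ℕ), Q X n ⟶ Q X (n + 1))
    (hsbarζ : ∀ (X : I) (n : ℕ),
      F.map (sbar X n) ≫ (ζ X (n + 1)).hom = (ζ X n).hom ≫ rhoD Dh D ε μ X)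
    [PreservesColimitsOfShape ℕ F]
    (R : I → A)
    (t : ∀ (X : I) (n : ℕ), Q X n ⟶ R X)
    (ht : ∀ (X : I) (n : ℕ), t X n = sbar X n ≫ t X (n + 1))
    (hcolim : ∀ X : I, Nonempty (IsColimit (chainCocone (sbar X) (R X) (t X) (ht X))))
    (Rmap : ∀ {X Y : I}, (X ⟶ Y) → (R X ⟶ R Y))
    (hRt : ∀ {X Y : I} (f : X ⟶ Y) (n : ℕ), t X n ≫ Rmap f = Qmap f n ≫ t Y n) :
    ∃ δ : ∀ X : I, F.obj (R X) ⟶ D.obj X,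
      (∀ (X : I) (n : ℕ), F.map (t X n) ≫ δ X = (ζ X n).hom ≫ μ.app X) ∧
      (∀ (X : I) (δ' : F.obj (R X) ⟶ D.obj X),
        (∀ n : ℕ, F.map (t X n) ≫ δ' = (ζ X n).hom ≫ μ.app X) → δ' = δ X) ∧
      (∀ X : I, IsIso (δ X)) ∧
      (∀ {X Y : I} (f : X ⟶ Y), F.map (Rmap f) ≫ δ Y = δ X ≫ D.map f) := by
  have hF : ∀ X, IsColimit (F.mapCocone (chainCocone (sbar X) (R X) (t X) (ht X))) :=
    fun X => isColimitOfPreserves F (hcolim X).some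
  have hstep : ∀ X n,
      F.map (sbar X n) = ((ζ X n).hom ≫ μ.app X) ≫ ε.app X ≫ (ζ X (n + 1)).inv := fun X n => by
    rw [← Category.assoc, Iso.eq_comp_inv, hsbarζ, rhoD, Category.assoc]
  have hsplit : ∀ X n, (ε.app X ≫ (ζ X n).inv) ≫ (ζ X n).hom ≫ μ.app X = 𝟙 (D.obj X) :=
    fun X n => by rw [Category.assoc, Iso.inv_hom_id_assoc, hretr]
  have hD : ∀ X, IsColimit (coconeOfSplitSteps (K := Functor.ofSequence (sbar X) ⋙ F)
      (fun n => (ζ X n).hom ≫ μ.app X) (fun n => ε.app X ≫ (ζ X n).inv)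
      (hsplit X)
      (fun n => (congrArg F.map (Functor.ofSequence_map_homOfLE_succ _ n)).trans (hstep X n))) :=
    fun X => isColimitCoconeOfSplitSteps ..
  let δ : ∀ X, F.obj (R X) ≅ D.obj X := fun X => (hF X).coconePointUniqueUpToIso (hD X)
  have hδ : ∀ X n, F.map (t X n) ≫ (δ X).hom = (ζ X n).hom ≫ μ.app X :=
    fun X => (hF X).comp_coconePointUniqueUpToIso_hom (hD X)
  refine ⟨fun X => (δ X).hom, hδ, fun X δ' h => (hF X).hom_ext fun n => (h n).trans (hδ X n).symm,
    fun X => (δ X).isIso_hom, fun {X Y} f => (hF X).hom_ext fun n => ?_⟩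
  calc F.map (t X n) ≫ F.map (Rmap f) ≫ (δ Y).hom
      = F.map (Qmap f n) ≫ F.map (t Y n) ≫ (δ Y).hom := by
        rw [← F.map_comp_assoc, hRt, F.map_comp_assoc]
    _ = (ζ X n).hom ≫ Dh.map f ≫ μ.app Y := by rw [hδ, reassoc_of% hQζ]
    _ = F.map (t X n) ≫ (δ X).hom ≫ D.map f := by rw [μ.naturality, reassoc_of% hδ]

/-- (Lemma `L:deltaequiv`, Section `S:LiftxD`.)  Assume `A` has
colimits of chains indexed by `ℕ` and `F` preserves them.  With `R(X) = colim_n Q^n(X)`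
(limiting morphisms `t^X_n`) and `R(f)` as in Statement 10, there is a family of
morphisms `δ^X : F(R(X)) ⟶ D(X)`, uniquely determined by
`δ^X ∘ F(t^X_n) = μ_X ∘ ζ^X_n` for all `n`, each `δ^X` is an isomorphism, and
`δ^Y ∘ F(R(f)) = D(f) ∘ δ^X` for every `f : X ⟶ Y`; i.e. `δ` is a natural isomorphism
from `R ⋙ F` to `D`, so `R` is a lifting of `D` with respect to `F`. -/
theorem R_lifts_D [HasBinaryProducts B] (D Dh : I ⥤ B) (ε : D ⟶ Dh) (μ : Dh ⟶ D)
    (hretr : ∀ X : I, ε.app X ≫ μ.app X = 𝟙 (D.obj X))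
    {A : Type u₃} [Category.{v₃} A] (F : A ⥤ B)
    -- a lifting `E` of the unfolding of the retraction datum with respect to `F`
    -- (indices shifted by one: `E X n` is the paper's `E^{n+1}(X)`):
    (E : I → ℕ → A)
    (s : ∀ (X : I) (n : ℕ), E X n ⟶ E X (n + 1))
    (Emap : ∀ {X Y : I}, (X ⟶ Y) → ∀ n : ℕ, E X n ⟶ E Y n)
    (hEid : ∀ (X : I) (n : ℕ), Emap (𝟙 X) n = 𝟙 (E X n))
    (hEcomp : ∀ {X Y Z : I} (f : X ⟶ Y) (g : Y ⟶ Z) (n : ℕ),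
      Emap (f ≫ g) n = Emap f n ≫ Emap g n)
    (hEs : ∀ {X Y : I} (f : X ⟶ Y) (n : ℕ), s X n ≫ Emap f (n + 1) = Emap f n ≫ s Y n)
    (η : ∀ (X : I) (n : ℕ), F.obj (E X n) ≅ powD Dh X n)
    (hηnat : ∀ {X Y : I} (f : X ⟶ Y) (n : ℕ),
      F.map (Emap f n) ≫ (η Y n).hom = (η X n).hom ≫ powMapD Dh f n)
    (hηs : ∀ (X : I) (n : ℕ),
      F.map (s X n) ≫ (η X (n + 1)).hom = (η X n).hom ≫ sigmaD Dh D ε μ X n)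
    -- projectability witnesses `(a^X_n, ζ^X_n)` for `(α^X_n ∘ η^X_n, E^n(X), D̂(X))`:
    (Q : I → ℕ → A)
    (a : ∀ (X : I) (n : ℕ), E X n ⟶ Q X n)
    (ha : ∀ (X : I) (n : ℕ), Epi (a X n))
    (ζ : ∀ (X : I) (n : ℕ), F.obj (Q X n) ≅ Dh.obj X)
    (hζ : ∀ (X : I) (n : ℕ),
      F.map (a X n) ≫ (ζ X n).hom = (η X n).hom ≫ alphaD Dh X n)
    (hwit : ∀ (X : I) (n : ℕ) {Z : A} (u : E X n ⟶ Z) (θ : F.obj (Q X n) ⟶ F.obj Z),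
      F.map u = F.map (a X n) ≫ θ → ∃ g : Q X n ⟶ Z, u = a X n ≫ g ∧ θ = F.map g)
    (Qmap : ∀ {X Y : I}, (X ⟶ Y) → ∀ n : ℕ, Q X n ⟶ Q Y n)
    (hQa : ∀ {X Y : I} (f : X ⟶ Y) (n : ℕ), a X n ≫ Qmap f n = Emap f n ≫ a Y n)
    (hQζ : ∀ {X Y : I} (f : X ⟶ Y) (n : ℕ),
      F.map (Qmap f n) ≫ (ζ Y n).hom = (ζ X n).hom ≫ Dh.map f)
    (sbar : ∀ (X : I) (n : ℕ), Q X n ⟶ Q X (n + 1))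
    (hsbara : ∀ (X : I) (n : ℕ), a X n ≫ sbar X n = s X n ≫ a X (n + 1))
    (hsbarζ : ∀ (X : I) (n : ℕ),
      F.map (sbar X n) ≫ (ζ X (n + 1)).hom = (ζ X n).hom ≫ rhoD Dh D ε μ X)
    [HasColimitsOfShape ℕ A] [PreservesColimitsOfShape ℕ F]
    (R : I → A)
    (t : ∀ (X : I) (n : ℕ), Q X n ⟶ R X)
    (ht : ∀ (X : I) (n : ℕ), t X n = sbar X n ≫ t X (n + 1))
    (hcolim : ∀ X : I, Nonempty (IsColimit (chainCocone (sbar X) (R X) (t X) (ht X))))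
    (Rmap : ∀ {X Y : I}, (X ⟶ Y) → (R X ⟶ R Y))
    (hRt : ∀ {X Y : I} (f : X ⟶ Y) (n : ℕ), t X n ≫ Rmap f = Qmap f n ≫ t Y n) :
    ∃ δ : ∀ X : I, F.obj (R X) ⟶ D.obj X,
      (∀ (X : I) (n : ℕ), F.map (t X n) ≫ δ X = (ζ X n).hom ≫ μ.app X) ∧
      (∀ (X : I) (δ' : F.obj (R X) ⟶ D.obj X),
        (∀ n : ℕ, F.map (t X n) ≫ δ' = (ζ X n).hom ≫ μ.app X) → δ' = δ X) ∧
      (∀ X : I, IsIso (δ X)) ∧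
      (∀ {X Y : I} (f : X ⟶ Y), F.map (Rmap f) ≫ δ Y = δ X ≫ D.map f) :=
  R_lifts_D_general D Dh ε μ hretr F Q ζ Qmap hQζ sbar hsbarζ R t ht hcolim Rmap hRt
end
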